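/- Let d ≥ 2 and let B ⊆ S^{d-1} be a nonempty open geodesic ball. Then there exist an orthogonal projection P_B on L²(S^{d-1}) localized on B and a constant c > 0 such that for every f ∈ L²(S^{d-1}) the map SO(d) → L²(S^{d-1}), b ↦ (T_b ∘ P_B ∘ T_{b^{-1}}) f, is continuous, and its Bochner integral satisfies ∫_{SO(d)} (T_b ∘ P_B ∘ T_{b^{-1}}) f dμ(b) = c · f in L²(S^{d-1}). -/

import Mathlib

open MeasureTheory Matrix Metric
open scoped RealInnerProductSpace Pointwise
noncomputable section

/-- `ℝ^d` as Euclidean space. -/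
abbrev Eucl (d : ℕ) : Type := EuclideanSpace ℝ (Fin d)

/-- The unit sphere `S^{d-1} ⊆ ℝ^d`. -/
abbrev Sph (d : ℕ) := Metric.sphere (0 : Eucl d) 1

instance (d : ℕ) : MeasurableSpace (Matrix (Fin d) (Fin d) ℝ) :=
  inferInstanceAs (MeasurableSpace (Fin d → Fin d → ℝ))

/-- The special orthogonal group `SO(d)` as a subgroup of the orthogonal group. -/
def SOsub (d : ℕ) : Subgroup ↥(Matrix.orthogonalGroup (Fin d) ℝ) where
  carrier := {A | Matrix.det (A : Matrix (Fin d) (Fin d) ℝ) = 1}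
  one_mem' := by simp
  mul_mem' := by
    intro a b ha hb
    simp only [Set.mem_setOf_eq] at *
    rw [Matrix.UnitaryGroup.mul_val, Matrix.det_mul, ha, hb, mul_one]
  inv_mem' := by
    intro a ha
    simp only [Set.mem_setOf_eq] at *
    rw [Matrix.UnitaryGroup.inv_val, Matrix.star_eq_conjTranspose,
      show ((a : Matrix (Fin d) (Fin d) ℝ))ᴴ = (a : Matrix (Fin d) (Fin d) ℝ)ᵀ from rfl,
      Matrix.det_transpose, ha]

/-- The special orthogonal group `SO(d)`. -/
abbrev SOg (d : ℕ) := ↥(SOsub d)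

/-- The matrix of an element of `SO(d)`. -/
abbrev SOg.mat {d : ℕ} (b : SOg d) : Matrix (Fin d) (Fin d) ℝ :=
  ((b : ↥(Matrix.orthogonalGroup (Fin d) ℝ)) : Matrix (Fin d) (Fin d) ℝ)

lemma SOg.matT_mul {d : ℕ} (b : SOg d) : b.matᵀ * b.mat = 1 := by
  have h := (b : ↥(Matrix.orthogonalGroup (Fin d) ℝ)).2.1
  simpa [Matrix.star_eq_conjTranspose] using h

lemma mulVec_mem_sphere {d : ℕ} (b : SOg d) (x : Sph d) :
    (WithLp.equiv 2 (Fin d → ℝ)).symm (b.mat.mulVec ((WithLp.equiv 2 (Fin d → ℝ)) x.1)) ∈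
      Metric.sphere (0 : Eucl d) 1 := by
  have hx : ‖x.1‖ = 1 := by simpa using x.2
  rw [mem_sphere_iff_norm, sub_zero]
  have key : ∀ w : Eucl d,
      ‖w‖ ^ 2 = (WithLp.equiv 2 (Fin d → ℝ)) w ⬝ᵥ (WithLp.equiv 2 (Fin d → ℝ)) w := by
    intro w
    rw [EuclideanSpace.norm_eq, Real.sq_sqrt (by positivity)]
    simp [dotProduct, sq_abs, pow_two]
  set v : Fin d → ℝ := (WithLp.equiv 2 (Fin d → ℝ)) x.1 with hv
  have hdot : (b.mat.mulVec v) ⬝ᵥ (b.mat.mulVec v) = v ⬝ᵥ v := by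
    rw [Matrix.dotProduct_mulVec, ← Matrix.mulVec_transpose, Matrix.mulVec_mulVec, SOg.matT_mul,
      Matrix.one_mulVec]
  have h1 : ‖(WithLp.equiv 2 (Fin d → ℝ)).symm (b.mat.mulVec v)‖ ^ 2 = (1 : ℝ) := by
    rw [key, Equiv.apply_symm_apply, hdot, ← key, hx, one_pow]
  nlinarith [norm_nonneg ((WithLp.equiv 2 (Fin d → ℝ)).symm (b.mat.mulVec v))]

/-- The rotation action of `SO(d)` on the sphere `S^{d-1}`. -/
def rot {d : ℕ} (b : SOg d) (x : Sph d) : Sph d :=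
  ⟨(WithLp.equiv 2 (Fin d → ℝ)).symm (b.mat.mulVec ((WithLp.equiv 2 (Fin d → ℝ)) x.1)),
    mulVec_mem_sphere b x⟩

lemma continuous_rot {d : ℕ} (b : SOg d) : Continuous (rot b) := by
  apply Continuous.subtype_mk
  refine (PiLp.continuous_toLp (p := 2) (β := fun _ : Fin d => ℝ)).comp ?_
  have : Continuous fun v : Fin d → ℝ => b.mat.mulVec v :=
    b.mat.mulVecLin.continuous_of_finiteDimensional
  exact this.comp ((PiLp.continuous_ofLp (p := 2) (β := fun _ : Fin d => ℝ)).comp continuous_subtype_val)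

/-- Rotation as a continuous self-map of the sphere. -/
def rotCM {d : ℕ} (b : SOg d) : C(Sph d, Sph d) := ⟨rot b, continuous_rot b⟩

/-- The rotation operator `T_b f = f ∘ b⁻¹` on continuous functions on the sphere. -/
def Trot {d : ℕ} (b : SOg d) (f : C(Sph d, ℝ)) : C(Sph d, ℝ) := f.comp (rotCM b⁻¹)

/-- The rotation operator `T_b` on `L²` of the sphere. -/
def TrotL2 {d : ℕ} (σ : Measure (Sph d)) (hσ : ∀ b : SOg d, MeasurePreserving (rot b) σ σ)
    (b : SOg d) : Lp ℝ 2 σ →L[ℝ] Lp ℝ 2 σ :=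
  (Lp.compMeasurePreservingₗᵢ ℝ (rot b⁻¹) (hσ b⁻¹)).toContinuousLinearMap

/-!
Take for `P` multiplication by the indicator of `K = closedBall x₀ (r / 2)`. Conjugating it by
`T_b` gives multiplication by the indicator of `b • K`, so after pairing with `v ∈ L²` and
applying Fubini the average becomes `∫ v f · μ {b | b⁻¹ • x ∈ K} dσ(x)`. For `d ≥ 2` the group
`SO(d)` acts transitively on the sphere (a product of two reflections moves any unit vector to
any other), so left invariance of `μ` makes `μ {b | b⁻¹ • x ∈ K}` independent of `x`; integrating
over `x` identifies it with `σ K`, which is positive because an invariant measure charges every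
nonempty open set. Continuity in `b` is the joint continuity of the action of `SO(d)` on `L²`
by precomposition.
-/

namespace MeasureTheory.Lp

variable {X : Type*} [MeasurableSpace X] {σ : Measure X} {K : Set X}

variable (σ) in
def indicatorMul (hK : MeasurableSet K) : Lp ℝ 2 σ →L[ℝ] Lp ℝ 2 σ :=
  (ContinuousLinearMap.lsmul ℝ ℝ).holderL σ ⊤ 2 2
    (((memLp_top_const (1 : ℝ)).indicator hK).toLp (K.indicator fun _ ↦ 1))

lemma coeFn_indicatorMul (hK : MeasurableSet K) (f : Lp ℝ 2 σ) :
    indicatorMul σ hK f =ᵐ[σ] K.indicator f := by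
  have h1 : MemLp (K.indicator fun _ ↦ (1 : ℝ)) ⊤ σ := (memLp_top_const 1).indicator hK
  have hPf : indicatorMul σ hK f =ᵐ[σ] fun x ↦ h1.toLp _ x * f x :=
    ContinuousLinearMap.coeFn_holder _ _ f
  filter_upwards [hPf, h1.coeFn_toLp] with x hPf h1
  by_cases hx : x ∈ K <;> simp [hPf, h1, hx]

lemma isSymmetric_indicatorMul (hK : MeasurableSet K) :
    (indicatorMul σ hK : Lp ℝ 2 σ →ₗ[ℝ] Lp ℝ 2 σ).IsSymmetric := by
  intro f g
  simp only [ContinuousLinearMap.coe_coe, L2.inner_def]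
  refine integral_congr_ae ?_
  filter_upwards [coeFn_indicatorMul hK f, coeFn_indicatorMul hK g] with x hf hg
  by_cases hx : x ∈ K <;> simp [hf, hg, hx]

lemma indicatorMul_indicatorMul (hK : MeasurableSet K) (f : Lp ℝ 2 σ) :
    indicatorMul σ hK (indicatorMul σ hK f) = indicatorMul σ hK f := by
  refine Lp.ext ?_
  filter_upwards [coeFn_indicatorMul hK (indicatorMul σ hK f), coeFn_indicatorMul hK f]
    with x hPPf hPf
  by_cases hx : x ∈ K <;> simp [hPPf, hPf, hx]

lemma ae_indicatorMul_eq_zero_of_notMem (hK : MeasurableSet K) (f : Lp ℝ 2 σ) :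
    ∀ᵐ x ∂σ, x ∉ K → indicatorMul σ hK f x = 0 := by
  filter_upwards [coeFn_indicatorMul hK f] with x hPf hx
  simp [hPf, hx]

lemma indicatorMul_eq_zero (hK : MeasurableSet K) {f : Lp ℝ 2 σ}
    (hf : ∀ᵐ x ∂σ, x ∈ K → f x = 0) : indicatorMul σ hK f = 0 := by
  refine Lp.ext ((coeFn_indicatorMul hK f).trans ?_)
  filter_upwards [hf, Lp.coeFn_zero ℝ 2 σ] with x hfx h0
  rw [h0]
  by_cases hx : x ∈ K <;> simp [hfx, hx]

end MeasureTheory.Lp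

section Averaging

open MeasureTheory.Lp Filter

variable {G X : Type*} [Group G] [MulAction G X] [MeasurableSpace X] {σ : Measure X} {K : Set X}

lemma coeFn_mk_inv_smul_indicatorMul_mk_smul [MeasurableConstSMul G X]
    [SMulInvariantMeasure G X σ] (hK : MeasurableSet K) (b : G) (f : Lp ℝ 2 σ) :
    DomMulAct.mk b⁻¹ • indicatorMul σ hK (DomMulAct.mk b • f) =ᵐ[σ] (b • K).indicator f := by
  have hbf : indicatorMul σ hK (DomMulAct.mk b • f) =ᵐ[σ] K.indicator (fun y ↦ f (b • y)) :=
    (coeFn_indicatorMul hK _).trans (DomMulAct.smul_Lp_ae_eq _ f).indicator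
  filter_upwards [DomMulAct.smul_Lp_ae_eq (DomMulAct.mk b⁻¹) (indicatorMul σ hK _),
    (measurePreserving_smul b⁻¹ σ).quasiMeasurePreserving.ae_eq_comp hbf] with x h1 h2
  simp only [Equiv.symm_apply_apply, Function.comp_apply] at h1 h2
  rw [h1, h2]
  by_cases hx : b⁻¹ • x ∈ K
  · rw [Set.indicator_of_mem hx, Set.indicator_of_mem (Set.mem_smul_set_iff_inv_smul_mem.2 hx),
      smul_inv_smul]
  · rw [Set.indicator_of_notMem hx,
      Set.indicator_of_notMem (mt Set.mem_smul_set_iff_inv_smul_mem.1 hx)]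

variable [MeasurableSpace G] {μ : Measure G}
  [IsProbabilityMeasure μ] [IsProbabilityMeasure σ] [SMulInvariantMeasure G X σ]

lemma measure_setOf_inv_smul_mem [MeasurableMul G] [μ.IsMulLeftInvariant]
    [MulAction.IsPretransitive G X] (hK : MeasurableSet {p : G × X | p.1⁻¹ • p.2 ∈ K}) (x : X) :
    μ {b | b⁻¹ • x ∈ K} = σ K := by
  have hconst : ∀ y, μ {b | b⁻¹ • y ∈ K} = μ {b | b⁻¹ • x ∈ K} := by
    intro y
    obtain ⟨g, rfl⟩ := MulAction.exists_smul_eq G y x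
    rw [← measure_preimage_mul μ g {b | b⁻¹ • g • y ∈ K}]
    congr 1
    ext b
    simp [mul_smul]
  calc μ {b | b⁻¹ • x ∈ K}
      = (μ.prod σ) {p : G × X | p.1⁻¹ • p.2 ∈ K} := by
        rw [Measure.prod_apply_symm hK]
        simp only [Set.preimage_ofPred_eq, hconst, lintegral_const, measure_univ, mul_one]
    _ = σ K := by
        have hslice (b : G) : σ {y | b⁻¹ • y ∈ K} = σ K := measure_preimage_smul σ b⁻¹ K
        rw [Measure.prod_apply hK]
        simp only [Set.preimage_ofPred_eq, hslice, lintegral_const, measure_univ, mul_one]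

lemma integral_integral_indicator_smul_set [MeasurableMul G] [μ.IsMulLeftInvariant]
    [MulAction.IsPretransitive G X] {E : Type*} [NormedAddCommGroup E] [NormedSpace ℝ E]
    [CompleteSpace E] (hK : MeasurableSet {p : G × X | p.1⁻¹ • p.2 ∈ K}) {h : X → E}
    (hh : Integrable h σ) :
    ∫ b, ∫ x, (b • K).indicator h x ∂σ ∂μ = σ.real K • ∫ x, h x ∂σ := by
  have hind (b : G) (x : X) : (b • K).indicator h x =
      {p : G × X | p.1⁻¹ • p.2 ∈ K}.indicator (fun p ↦ h p.2) (b, x) := by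
    by_cases hx : b⁻¹ • x ∈ K <;> simp [Set.mem_smul_set_iff_inv_smul_mem, hx]
  have hint : Integrable (Function.uncurry fun b x ↦ (b • K).indicator h x) (μ.prod σ) := by
    simpa only [Function.uncurry_def, hind] using (hh.comp_snd μ).indicator hK
  rw [integral_integral_swap hint, ← integral_smul]
  refine integral_congr_ae (ae_of_all _ fun x ↦ ?_)
  have hslice : MeasurableSet {b : G | b⁻¹ • x ∈ K} := measurable_prodMk_right hK
  calc ∫ b, (b • K).indicator h x ∂μ
      = ∫ b, {b : G | b⁻¹ • x ∈ K}.indicator (fun _ ↦ h x) b ∂μ := by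
        refine integral_congr_ae (ae_of_all _ fun b ↦ ?_)
        by_cases hb : b⁻¹ • x ∈ K <;> simp [Set.mem_smul_set_iff_inv_smul_mem, hb]
    _ = σ.real K • h x := by
        rw [integral_indicator_const _ hslice, measureReal_def,
          measure_setOf_inv_smul_mem (σ := σ) hK, ← measureReal_def]

theorem integral_mk_inv_smul_indicatorMul_mk_smul [MeasurableConstSMul G X] [MeasurableMul G]
    [μ.IsMulLeftInvariant] [MulAction.IsPretransitive G X] (hK : MeasurableSet K)
    (hQ : MeasurableSet {p : G × X | p.1⁻¹ • p.2 ∈ K}) (f : Lp ℝ 2 σ)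
    (hF : AEStronglyMeasurable
      (fun b : G ↦ DomMulAct.mk b⁻¹ • indicatorMul σ hK (DomMulAct.mk b • f)) μ) :
    ∫ b, DomMulAct.mk b⁻¹ • indicatorMul σ hK (DomMulAct.mk b • f) ∂μ = σ.real K • f := by
  have hint : Integrable
      (fun b : G ↦ DomMulAct.mk b⁻¹ • indicatorMul σ hK (DomMulAct.mk b • f)) μ := by
    refine Integrable.of_bound hF (‖indicatorMul σ hK‖ * ‖f‖) (ae_of_all _ fun b ↦ ?_)
    simpa only [DomMulAct.norm_smul_Lp] using (indicatorMul σ hK).le_opNorm (DomMulAct.mk b • f)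
  refine ext_inner_left ℝ fun v ↦ ?_
  have hinner (b : G) : ⟪v, DomMulAct.mk b⁻¹ • indicatorMul σ hK (DomMulAct.mk b • f)⟫ =
      ∫ x, (b • K).indicator (fun x ↦ ⟪v x, f x⟫) x ∂σ := by
    rw [L2.inner_def]
    refine integral_congr_ae ?_
    filter_upwards [coeFn_mk_inv_smul_indicatorMul_mk_smul hK b f] with x hx
    rw [hx]
    by_cases hb : x ∈ b • K <;> simp [hb]
  rw [← integral_inner hint, integral_congr_ae (ae_of_all _ hinner),
    integral_integral_indicator_smul_set hQ (L2.integrable_inner v f), inner_smul_right,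
    L2.inner_def, smul_eq_mul]

end Averaging

section Rotations

open Module

lemma exists_linearIsometryEquiv_det_eq_one_apply_eq {E : Type*} [NormedAddCommGroup E]
    [InnerProductSpace ℝ E] [FiniteDimensional ℝ E] (hE : 2 ≤ finrank ℝ E) {x y : E}
    (h : ‖x‖ = ‖y‖) :
    ∃ e : E ≃ₗᵢ[ℝ] E, LinearMap.det (e.toLinearEquiv : E →ₗ[ℝ] E) = 1 ∧ e x = y := by
  rcases eq_or_ne x y with rfl | hxy
  · exact ⟨LinearIsometryEquiv.refl ℝ E, LinearMap.det_id, rfl⟩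
  have hx_ne_top : (ℝ ∙ x) ≠ ⊤ := fun htop ↦ by
    have := finrank_span_le_card (R := ℝ) ({x} : Set E)
    rw [htop, finrank_top, Set.toFinset_singleton, Finset.card_singleton] at this
    omega
  obtain ⟨v, hv, hv0⟩ := Submodule.exists_mem_ne_zero_of_ne_bot
    (mt Submodule.orthogonal_eq_bot_iff.1 hx_ne_top)
  have hdet {w : E} (hw : w ≠ 0) :
      LinearMap.det ((ℝ ∙ w)ᗮ.reflection.toLinearEquiv : E →ₗ[ℝ] E) = -1 := by
    rw [Submodule.det_reflection, Submodule.orthogonal_orthogonal, finrank_span_singleton hw,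
      pow_one]
  have hxv : x ∈ (ℝ ∙ v)ᗮ := by
    rw [Submodule.mem_orthogonal_singleton_iff_inner_right, real_inner_comm]
    exact Submodule.mem_orthogonal_singleton_iff_inner_right.1 hv
  refine ⟨(ℝ ∙ v)ᗮ.reflection.trans (ℝ ∙ (x - y))ᗮ.reflection, ?_, ?_⟩
  · rw [LinearIsometryEquiv.toLinearEquiv_trans, LinearEquiv.coe_trans, LinearMap.det_comp,
      hdet (sub_ne_zero.2 hxy), hdet hv0]
    norm_num
  · rw [LinearIsometryEquiv.trans_apply, Submodule.reflection_mem_subspace_eq_self hxv,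
      Submodule.reflection_sub h]

instance (d : ℕ) : SecondCountableTopology (Matrix (Fin d) (Fin d) ℝ) :=
  inferInstanceAs (SecondCountableTopology (Fin d → Fin d → ℝ))

instance (d : ℕ) : BorelSpace (Matrix (Fin d) (Fin d) ℝ) :=
  inferInstanceAs (BorelSpace (Fin d → Fin d → ℝ))

instance (d : ℕ) : SecondCountableTopology (Matrix.orthogonalGroup (Fin d) ℝ) :=
  TopologicalSpace.secondCountableTopology_induced _ _ Subtype.val

instance (d : ℕ) : SecondCountableTopology (SOg d) :=
  TopologicalSpace.secondCountableTopology_induced _ _ Subtype.val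

namespace SOg

variable {d : ℕ}

lemma rot_one (x : Sph d) : rot 1 x = x := by
  ext1
  simp [rot, show (1 : SOg d).mat = 1 from rfl]

lemma rot_mul (a b : SOg d) (x : Sph d) : rot (a * b) x = rot a (rot b x) := by
  ext1
  simp [rot, Matrix.mulVec_mulVec, show (a * b).mat = a.mat * b.mat from rfl]

instance : MulAction (SOg d) (Sph d) where
  smul := rot
  one_smul := rot_one
  mul_smul := rot_mul

instance : ContinuousSMul (SOg d) (Sph d) where
  continuous_smul := by
    refine Continuous.subtype_mk ((PiLp.continuous_toLp 2 _).comp ?_) _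
    exact (continuous_subtype_val.comp (continuous_subtype_val.comp continuous_fst)).matrix_mulVec
      ((PiLp.continuous_ofLp 2 _).comp (continuous_subtype_val.comp continuous_snd))

lemma isPretransitive (hd : 2 ≤ d) : MulAction.IsPretransitive (SOg d) (Sph d) where
  exists_smul_eq x y := by
    obtain ⟨e, he, hxy⟩ := exists_linearIsometryEquiv_det_eq_one_apply_eq
      (by rwa [finrank_euclideanSpace_fin]) (show ‖x.1‖ = ‖y.1‖ by simp)
    let B := (EuclideanSpace.basisFun (Fin d) ℝ).toBasis
    refine ⟨⟨⟨LinearMap.toMatrix B B e, e.toMatrix_mem_unitaryGroup _ _⟩, ?_⟩, ?_⟩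
    · exact (LinearMap.det_toMatrix B _).trans he
    · ext1
      change Matrix.toLin B B (LinearMap.toMatrix B B e) x.1 = y.1
      rw [Matrix.toLin_toMatrix]
      exact hxy

end SOg

instance (d : ℕ) : MeasurableConstSMul (SOg d) (Sph d) :=
  ContinuousConstSMul.toMeasurableConstSMul

end Rotations

theorem exists_projection_on_ball_bochner_average_identity_L2
    (d : ℕ) (hd : 2 ≤ d)
    (σ : Measure (Sph d)) [IsProbabilityMeasure σ]
    (hσ : ∀ b : SOg d, MeasurePreserving (rot b) σ σ)
    (μ : Measure (SOg d)) [IsProbabilityMeasure μ]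
    (hμ : ∀ g : SOg d, MeasurePreserving (fun b => g * b) μ μ)
    (x₀ : Sph d) (r : ℝ) (hr : 0 < r) :
    ∃ (P : Lp ℝ 2 σ →L[ℝ] Lp ℝ 2 σ) (c : ℝ),
      0 < c ∧
      -- `P` is an orthogonal projection
      (∀ f g : Lp ℝ 2 σ, ⟪P f, g⟫ = ⟪f, P g⟫) ∧
      (∀ f : Lp ℝ 2 σ, P (P f) = P f) ∧
      -- `P` is localized on the ball `B = ball x₀ r`
      (∃ K : Set (Sph d), IsCompact K ∧ K ⊆ Metric.ball x₀ r ∧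
        (∀ f : Lp ℝ 2 σ, ∀ᵐ x ∂σ, x ∉ K → P f x = 0) ∧
        (∀ f : Lp ℝ 2 σ, (∀ᵐ x ∂σ, x ∈ K → f x = 0) → P f = 0)) ∧
      -- continuity and value of the Bochner integral of the conjugated operators
      (∀ f : Lp ℝ 2 σ,
        Continuous (fun b : SOg d => TrotL2 σ hσ b (P (TrotL2 σ hσ b⁻¹ f))) ∧
        ∫ b : SOg d, TrotL2 σ hσ b (P (TrotL2 σ hσ b⁻¹ f)) ∂μ = c • f) := by
  have := SOg.isPretransitive hd
  have : SMulInvariantMeasure (SOg d) (Sph d) σ :=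
    ⟨fun b _ hs ↦ (hσ b).measure_preimage hs.nullMeasurableSet⟩
  have : μ.IsMulLeftInvariant := ⟨fun g ↦ (hμ g).map_eq⟩
  have : Fact ((2 : ENNReal) ≠ ⊤) := ⟨ENNReal.ofNat_ne_top⟩
  have : ContinuousSMul (SOg d)ᵈᵐᵃ (Lp ℝ 2 σ) := Lp.instContinuousSMulDomMulAct
  have hT (b : SOg d) (f : Lp ℝ 2 σ) : TrotL2 σ hσ b f = DomMulAct.mk b⁻¹ • f := rfl
  set K := closedBall x₀ (r / 2)
  have hK : IsClosed K := isClosed_closedBall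
  have hσK : 0 < σ K :=
    (measure_isOpen_pos_of_smulInvariant_of_compact_ne_zero (SOg d) isCompact_univ (by simp)
      isOpen_ball ⟨x₀, mem_ball_self (half_pos hr)⟩).trans_le (measure_mono ball_subset_closedBall)
  refine ⟨Lp.indicatorMul σ hK.measurableSet, σ.real K,
    ENNReal.toReal_pos hσK.ne' (by finiteness), Lp.isSymmetric_indicatorMul _,
    Lp.indicatorMul_indicatorMul _, ⟨K, hK.isCompact, closedBall_subset_ball (half_lt_self hr),
      Lp.ae_indicatorMul_eq_zero_of_notMem _, fun _ ↦ Lp.indicatorMul_eq_zero _⟩, fun f ↦ ?_⟩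
  simp only [hT, inv_inv]
  have hcont : Continuous fun b : SOg d ↦
      DomMulAct.mk b⁻¹ • Lp.indicatorMul σ hK.measurableSet (DomMulAct.mk b • f) :=
    (DomMulAct.continuous_mk.comp continuous_inv).smul
      ((Lp.indicatorMul σ _).continuous.comp (DomMulAct.continuous_mk.smul continuous_const))
  exact ⟨hcont, integral_mk_inv_smul_indicatorMul_mk_smul _
    (hK.preimage (continuous_fst.inv.smul continuous_snd)).measurableSet f
    hcont.aestronglyMeasurable⟩
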